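/- The incoming and outgoing boundaries of the round-handle region are characterized as follows: {p ∈ P̃ : φ(t,p) ∉ P̃ for all t < 0} = {(x,y,z) ∈ P̃ : |y| = 1}, and {p ∈ P̃ : φ(t,p) ∉ P̃ for all t > 0} = {(x,y,z) ∈ P̃ : |x| = 1}. -/

import Mathlib

open Real Filter

/-- The point (a,b,c) in Euclidean 3-space. -/
noncomputable def pt (a b c : ℝ) : EuclideanSpace ℝ (Fin 3) :=
  (WithLp.equiv 2 (Fin 3 → ℝ)).symm ![a, b, c]

/-- The model flow φ(t,(x,y,z)) = (x·exp t, y·exp (−t), z + t). -/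
noncomputable def phi (t : ℝ) (p : EuclideanSpace ℝ (Fin 3)) : EuclideanSpace ℝ (Fin 3) :=
  pt (p 0 * Real.exp t) (p 1 * Real.exp (-t)) (p 2 + t)

/-- The round-handle region P̃ = {(x,y,z) : |x| ≤ 1, |y| ≤ 1, |x·y| ≤ 1/2}. -/
def Ptilde : Set (EuclideanSpace ℝ (Fin 3)) :=
  {p | |p 0| ≤ 1 ∧ |p 1| ≤ 1 ∧ |p 0 * p 1| ≤ 1/2}

/-! The flow preserves the product `x·y`, so leaving `P̃` forwards means `|x| e^t > 1` and
backwards means `|y| e^{-t} > 1`. If, say, `|x| < 1`, then the time `t = 1 - |x|` keeps the point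
inside, because `|x| e^{1-|x|} ≤ 1` is the inequality `|x| ≤ e^{|x|-1}`; if `|x| = 1`, the point
leaves at once. -/

theorem phi_mem_Ptilde_iff (t : ℝ) (p : EuclideanSpace ℝ (Fin 3)) :
    phi t p ∈ Ptilde ↔
      |p 0| * exp t ≤ 1 ∧ |p 1| * exp (-t) ≤ 1 ∧ |p 0 * p 1| ≤ 1 / 2 := by
  have hx : phi t p 0 = p 0 * exp t := rfl
  have hy : phi t p 1 = p 1 * exp (-t) := rfl
  have hxy : phi t p 0 * phi t p 1 = p 0 * p 1 := by
    rw [hx, hy, mul_mul_mul_comm, ← exp_add, add_neg_cancel, exp_zero, mul_one]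
  change |phi t p 0| ≤ 1 ∧ |phi t p 1| ≤ 1 ∧ |phi t p 0 * phi t p 1| ≤ 1 / 2 ↔ _
  rw [hxy, hx, hy, abs_mul, abs_mul, abs_exp, abs_exp]

theorem mul_exp_one_sub_le_one (a : ℝ) : a * exp (1 - a) ≤ 1 := by
  calc a * exp (1 - a) ≤ exp (a - 1) * exp (1 - a) := by
        gcongr
        linarith [add_one_le_exp (a - 1)]
    _ = 1 := by rw [← exp_add, sub_add_sub_cancel, sub_self, exp_zero]

theorem forall_pos_not_mul_exp_le_one_iff {a b : ℝ} (ha : a ≤ 1) (hb₀ : 0 ≤ b) (hb : b ≤ 1) :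
    (∀ t : ℝ, 0 < t → ¬(a * exp t ≤ 1 ∧ b * exp (-t) ≤ 1)) ↔ a = 1 := by
  constructor
  · intro h
    by_contra hne
    have ht : 0 < 1 - a := sub_pos.mpr (lt_of_le_of_ne ha hne)
    refine h (1 - a) ht ⟨mul_exp_one_sub_le_one a, ?_⟩
    calc b * exp (-(1 - a)) ≤ b * 1 := by gcongr; exact exp_le_one_iff.mpr (by linarith)
      _ ≤ 1 := by rwa [mul_one]
  · rintro rfl t ht ⟨hx, -⟩
    rw [one_mul] at hx
    exact (one_lt_exp_iff.mpr ht).not_ge hx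

theorem forall_pos_phi_not_mem_Ptilde_iff {p : EuclideanSpace ℝ (Fin 3)} (hp : p ∈ Ptilde) :
    (∀ t : ℝ, 0 < t → phi t p ∉ Ptilde) ↔ |p 0| = 1 := by
  simp only [phi_mem_Ptilde_iff, and_iff_left hp.2.2]
  exact forall_pos_not_mul_exp_le_one_iff hp.1 (abs_nonneg _) hp.2.1

theorem forall_neg_phi_not_mem_Ptilde_iff {p : EuclideanSpace ℝ (Fin 3)} (hp : p ∈ Ptilde) :
    (∀ t : ℝ, t < 0 → phi t p ∉ Ptilde) ↔ |p 1| = 1 := by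
  simp only [phi_mem_Ptilde_iff, and_iff_left hp.2.2]
  rw [← forall_pos_not_mul_exp_le_one_iff hp.2.1 (abs_nonneg _) hp.1]
  constructor <;> intro h t ht <;> simpa only [neg_neg, and_comm] using h (-t) (by linarith)

/-- The incoming boundary of P̃ is {|y| = 1} and the outgoing boundary is {|x| = 1}. -/
theorem stmt_7 :
    {p : EuclideanSpace ℝ (Fin 3) | p ∈ Ptilde ∧ ∀ t : ℝ, t < 0 → phi t p ∉ Ptilde} =
      {p : EuclideanSpace ℝ (Fin 3) | p ∈ Ptilde ∧ |p 1| = 1} ∧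
    {p : EuclideanSpace ℝ (Fin 3) | p ∈ Ptilde ∧ ∀ t : ℝ, 0 < t → phi t p ∉ Ptilde} =
      {p : EuclideanSpace ℝ (Fin 3) | p ∈ Ptilde ∧ |p 0| = 1} :=
  ⟨Set.ext fun _ => and_congr_right forall_neg_phi_not_mem_Ptilde_iff,
    Set.ext fun _ => and_congr_right forall_pos_phi_not_mem_Ptilde_iff⟩
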